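/- arXiv:1210.4185 — 3 statements merged into one kernel-verified Lean document; each statement's English description precedes it below -/
import Mathlib

section
/- For any nonzero spinor ψ = (ψ₁, ψ₂) ∈ ℂ², write ψᵗσψ = a + ib with a, b ∈ ℝ³ and c := −ψ̂ᵗσψ ∈ ℝ³. Then ⟨a × b, c⟩ = det(a, b, c) > 0, where a × b is the cross product in ℝ³. -/
open Matrix Complex

/-- The first Cartan spinor matrix σ₁ = [[1,0],[0,−1]]. -/
noncomputable def sigma1 : Matrix (Fin 2) (Fin 2) ℂ := !![1, 0; 0, -1]

/-- The second Cartan spinor matrix σ₂ = [[i,0],[0,i]]. -/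
noncomputable def sigma2 : Matrix (Fin 2) (Fin 2) ℂ := !![Complex.I, 0; 0, Complex.I]

/-- The third Cartan spinor matrix σ₃ = [[0,−1],[−1,0]]. -/
noncomputable def sigma3 : Matrix (Fin 2) (Fin 2) ℂ := !![0, -1; -1, 0]

/-- For spinors φ, ψ ∈ ℂ², the vector φᵗσψ ∈ ℂ³ whose j-th component is φᵗσⱼψ. -/
noncomputable def spinorBilin (φ ψ : Fin 2 → ℂ) : Fin 3 → ℂ :=
  ![φ ⬝ᵥ sigma1.mulVec ψ, φ ⬝ᵥ sigma2.mulVec ψ, φ ⬝ᵥ sigma3.mulVec ψ]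

/-- The mate (conjugate) of a spinor ψ: ψ̂ = (−ψ̄₂, ψ̄₁). -/
noncomputable def mate (ψ : Fin 2 → ℂ) : Fin 2 → ℂ :=
  ![-(starRingEnd ℂ) (ψ 1), (starRingEnd ℂ) (ψ 0)]

/-- View a triple of reals as a vector in Euclidean 3-space. -/
noncomputable def toE3 (v : Fin 3 → ℝ) : EuclideanSpace ℝ (Fin 3) := WithLp.toLp 2 v

/-! Writing ψᵗσψ = a + ib and c = −ψ̂ᵗσψ in coordinates, one checks the identities
a × b = |ψ|² c and |c|² = |ψ|⁴. Hence det(a, b, c) = ⟨a × b, c⟩ = |ψ|⁶ > 0. -/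

open ComplexConjugate

lemma spinorBilin_self (ψ : Fin 2 → ℂ) :
    spinorBilin ψ ψ = ![ψ 0 ^ 2 - ψ 1 ^ 2, I * (ψ 0 ^ 2 + ψ 1 ^ 2), -2 * ψ 0 * ψ 1] := by
  ext j
  fin_cases j <;> simp [spinorBilin, sigma1, sigma2, sigma3, mulVec, dotProduct] <;> ring

lemma spinorBilin_mate_self (ψ : Fin 2 → ℂ) :
    spinorBilin (mate ψ) ψ = -![ψ 0 * conj (ψ 1) + conj (ψ 0) * ψ 1,
      I * (ψ 0 * conj (ψ 1) - conj (ψ 0) * ψ 1), ψ 0 * conj (ψ 0) - ψ 1 * conj (ψ 1)] := by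
  ext j
  fin_cases j <;> simp [spinorBilin, mate, sigma1, sigma2, sigma3, mulVec, dotProduct] <;> ring

noncomputable def spinorNormSq (ψ : Fin 2 → ℂ) : ℝ := ∑ i, normSq (ψ i)

lemma spinorNormSq_pos {ψ : Fin 2 → ℂ} (hψ : ψ ≠ 0) : 0 < spinorNormSq ψ := by
  obtain ⟨i, hi⟩ := Function.ne_iff.mp hψ
  exact Finset.sum_pos' (fun j _ => normSq_nonneg _) ⟨i, Finset.mem_univ _, normSq_pos.mpr hi⟩

lemma crossProduct_re_im_spinorBilin (ψ : Fin 2 → ℂ) :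
    crossProduct (fun j => (spinorBilin ψ ψ j).re) (fun j => (spinorBilin ψ ψ j).im) =
      spinorNormSq ψ • fun j => (-(spinorBilin (mate ψ) ψ j)).re := by
  simp_rw [spinorBilin_self, spinorBilin_mate_self, Pi.neg_apply, neg_neg]
  ext j
  fin_cases j <;> simp [spinorNormSq, crossProduct, normSq_apply, sq] <;> ring

lemma dotProduct_self_re_neg_spinorBilin_mate (ψ : Fin 2 → ℂ) :
    (fun j => (-(spinorBilin (mate ψ) ψ j)).re) ⬝ᵥ (fun j => (-(spinorBilin (mate ψ) ψ j)).re) =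
      spinorNormSq ψ ^ 2 := by
  simp_rw [spinorBilin_mate_self, Pi.neg_apply, neg_neg]
  simp [spinorNormSq, dotProduct, Fin.sum_univ_three, normSq_apply]
  ring

lemma inner_toE3 (u v : Fin 3 → ℝ) : inner ℝ (toE3 u) (toE3 v) = u ⬝ᵥ v := by
  simp [toE3, PiLp.inner_apply, dotProduct, mul_comm]

lemma inner_toE3_crossProduct (a b c : Fin 3 → ℝ) :
    inner ℝ (toE3 (crossProduct a b)) (toE3 c) = (Matrix.of ![a, b, c]).det := by
  rw [inner_toE3, dotProduct_comm, triple_product_permutation, triple_product_eq_det]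
  rfl

/-- For a nonzero spinor ψ, the triad a, b, c satisfies
⟨a × b, c⟩ = det(a, b, c) > 0. -/
theorem spinor_triad_det_pos (ψ : Fin 2 → ℂ) (hψ : ψ ≠ 0)
    (a b c : Fin 3 → ℝ)
    (ha : ∀ j, a j = (spinorBilin ψ ψ j).re)
    (hb : ∀ j, b j = (spinorBilin ψ ψ j).im)
    (hc : ∀ j, c j = (-(spinorBilin (mate ψ) ψ j)).re) :
    inner ℝ (toE3 (crossProduct a b)) (toE3 c) = (Matrix.of ![a, b, c]).det ∧
      0 < (Matrix.of ![a, b, c]).det := by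
  refine ⟨inner_toE3_crossProduct a b c, ?_⟩
  obtain rfl : a = _ := funext ha
  obtain rfl : b = _ := funext hb
  obtain rfl : c = _ := funext hc
  rw [← inner_toE3_crossProduct, crossProduct_re_im_spinorBilin, inner_toE3, smul_dotProduct,
    dotProduct_self_re_neg_spinorBilin_mate, smul_eq_mul]
  have := spinorNormSq_pos hψ
  positivity
end

section
/- (Spinor Frenet equation) Let T, N, B : ℝ → ℝ³ be differentiable unit vector fields along a unit-speed curve satisfying the Frenet equations dT/ds = κN, dN/ds = −κT + τB, dB/ds = −τN for differentiable functions κ, τ : ℝ → ℝ. Let ψ : ℝ → ℂ² be a differentiable spinor with ψ̄ᵗψ = 1 representing the triad {N, B, T}, i.e., N(s) + iB(s) = ψ(s)ᵗσψ(s) and T(s) = −ψ̂(s)ᵗσψ(s) for all s. Then ψ satisfies the single spinor equation dψ/ds = (1/2)(−iτψ + κψ̂). -/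
open Matrix Complex

/-!
Differentiating `N + iB = ψᵗσψ` and inserting the Frenet equations gives
`2 ψᵗσψ' = (N + iB)' = -κT - iτ(N + iB) = ψᵗσ(κψ̂ - iτψ)`, because every `σⱼ` is symmetric and
`T = -ψ̂ᵗσψ`. Hence `ψᵗσX = 0` for `X = 2ψ' - κψ̂ + iτψ`, and since `ψ ≠ 0` the three components
of `ψᵗσX` can only vanish together when `X = 0`.
-/

section

variable {𝕜 𝔸 n : Type*} [NontriviallyNormedField 𝕜] [NormedCommRing 𝔸] [NormedAlgebra 𝕜 𝔸]
  [Fintype n]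

theorem HasDerivAt.dotProduct_mulVec {u v : 𝕜 → n → 𝔸} {u' v' : n → 𝔸} {x : 𝕜}
    (M : Matrix n n 𝔸) (hu : HasDerivAt u u' x) (hv : HasDerivAt v v' x) :
    HasDerivAt (fun t => u t ⬝ᵥ M *ᵥ v t) (u' ⬝ᵥ M *ᵥ v x + u x ⬝ᵥ M *ᵥ v') x := by
  have hu' := hasDerivAt_pi.1 hu
  have hv' := hasDerivAt_pi.1 hv
  simp only [dotProduct, mulVec, ← Finset.sum_add_distrib]
  exact HasDerivAt.fun_sum fun i _ =>
    (hu' i).mul (HasDerivAt.fun_sum fun j _ => (hv' j).const_mul (M i j))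

theorem HasDerivAt.dotProduct_mulVec_self {ψ : 𝕜 → n → 𝔸} {ψ' : n → 𝔸} {x : 𝕜}
    {M : Matrix n n 𝔸} (hM : Mᵀ = M) (hψ : HasDerivAt ψ ψ' x) :
    HasDerivAt (fun t => ψ t ⬝ᵥ M *ᵥ ψ t) (2 * (ψ x ⬝ᵥ M *ᵥ ψ')) x := by
  convert hψ.dotProduct_mulVec M hψ using 1
  rw [two_mul, Matrix.dotProduct_mulVec, ← mulVec_transpose, hM, dotProduct_comm]

end

noncomputable def sigma : Fin 3 → Matrix (Fin 2) (Fin 2) ℂ := ![sigma1, sigma2, sigma3]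

theorem sigma_transpose (j : Fin 3) : (sigma j)ᵀ = sigma j := by
  fin_cases j <;> ext a b <;> fin_cases a <;> fin_cases b <;> rfl

theorem spinorBilin_apply (φ ψ : Fin 2 → ℂ) (j : Fin 3) :
    spinorBilin φ ψ j = φ ⬝ᵥ sigma j *ᵥ ψ := by
  fin_cases j <;> rfl

theorem spinorBilin_comm (φ ψ : Fin 2 → ℂ) : spinorBilin φ ψ = spinorBilin ψ φ := by
  funext j
  rw [spinorBilin_apply, spinorBilin_apply, Matrix.dotProduct_mulVec, ← mulVec_transpose,
    sigma_transpose, dotProduct_comm]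

theorem spinorBilin_add_right (φ ψ χ : Fin 2 → ℂ) :
    spinorBilin φ (ψ + χ) = spinorBilin φ ψ + spinorBilin φ χ := by
  funext j
  simp only [Pi.add_apply, spinorBilin_apply, mulVec_add, dotProduct_add]

theorem spinorBilin_sub_right (φ ψ χ : Fin 2 → ℂ) :
    spinorBilin φ (ψ - χ) = spinorBilin φ ψ - spinorBilin φ χ := by
  funext j
  simp only [Pi.sub_apply, spinorBilin_apply, mulVec_sub, dotProduct_sub]

theorem spinorBilin_smul_right (c : ℂ) (φ ψ : Fin 2 → ℂ) :
    spinorBilin φ (c • ψ) = c • spinorBilin φ ψ := by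
  funext j
  simp only [Pi.smul_apply, spinorBilin_apply, mulVec_smul, dotProduct_smul]

theorem HasDerivAt.spinorBilin_self {ψ : ℝ → Fin 2 → ℂ} {ψ' : Fin 2 → ℂ} {s : ℝ}
    (hψ : HasDerivAt ψ ψ' s) (j : Fin 3) :
    HasDerivAt (fun t => spinorBilin (ψ t) (ψ t) j) (2 * spinorBilin (ψ s) ψ' j) s := by
  simp only [spinorBilin_apply]
  exact hψ.dotProduct_mulVec_self (sigma_transpose j)

theorem spinorBilin_eq (φ ψ : Fin 2 → ℂ) :
    spinorBilin φ ψ =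
      ![φ 0 * ψ 0 - φ 1 * ψ 1, I * (φ 0 * ψ 0 + φ 1 * ψ 1), -(φ 0 * ψ 1 + φ 1 * ψ 0)] := by
  funext j
  fin_cases j <;>
    simp [spinorBilin, sigma1, sigma2, sigma3, dotProduct, mulVec, Fin.sum_univ_two] <;> ring

theorem eq_zero_of_spinorBilin_eq_zero {ψ X : Fin 2 → ℂ} (hψ : ψ ≠ 0)
    (h : spinorBilin ψ X = 0) : X = 0 := by
  rw [spinorBilin_eq] at h
  have h0 : ψ 0 * X 0 - ψ 1 * X 1 = 0 := congrFun h 0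
  have hsum : ψ 0 * X 0 + ψ 1 * X 1 = 0 := (mul_eq_zero.1 (congrFun h 1)).resolve_left I_ne_zero
  have h2 : ψ 0 * X 1 + ψ 1 * X 0 = 0 := neg_eq_zero.1 (congrFun h 2)
  have h00 : ψ 0 * X 0 = 0 := by linear_combination (h0 + hsum) / 2
  have h11 : ψ 1 * X 1 = 0 := by linear_combination (hsum - h0) / 2
  have h10 : ψ 1 * X 0 = 0 :=
    pow_eq_zero_iff two_ne_zero |>.1 (by linear_combination ψ 1 * X 0 * h2 - ψ 1 * X 1 * h00)
  have h01 : ψ 0 * X 1 = 0 :=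
    pow_eq_zero_iff two_ne_zero |>.1 (by linear_combination ψ 0 * X 1 * h2 - ψ 0 * X 0 * h11)
  have hsmul : ∀ k, X k • ψ = 0 := by
    intro k
    funext i
    fin_cases k <;> fin_cases i <;> simp [mul_comm (X _), h00, h11, h10, h01]
  funext k
  exact (smul_eq_zero.1 (hsmul k)).resolve_right hψ

theorem spinor_frenet_equation_general
    (T N B : ℝ → Fin 3 → ℝ) (κ τ : ℝ → ℝ)
    (hN : ∀ (s : ℝ) (j : Fin 3),
      HasDerivAt (fun t => N t j) (-(κ s) * T s j + τ s * B s j) s)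
    (hB : ∀ (s : ℝ) (j : Fin 3), HasDerivAt (fun t => B t j) (-(τ s) * N s j) s)
    (ψ : ℝ → Fin 2 → ℂ)
    (hψdiff : ∀ k : Fin 2, Differentiable ℝ fun t => ψ t k)
    (hψunit : ∀ s, (starRingEnd ℂ) (ψ s 0) * ψ s 0 + (starRingEnd ℂ) (ψ s 1) * ψ s 1 = 1)
    (hNB : ∀ (s : ℝ) (j : Fin 3),
      (N s j : ℂ) + Complex.I * (B s j : ℂ) = spinorBilin (ψ s) (ψ s) j)
    (hTrep : ∀ (s : ℝ) (j : Fin 3), (T s j : ℂ) = -(spinorBilin (mate (ψ s)) (ψ s) j)) :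
    ∀ (s : ℝ) (k : Fin 2),
      HasDerivAt (fun t => ψ t k)
        ((1 / 2) * (-Complex.I * (τ s : ℂ) * ψ s k + (κ s : ℂ) * mate (ψ s) k)) s := by
  intro s
  set ψ' := deriv ψ s
  have hψ : HasDerivAt ψ ψ' s := (differentiableAt_pi.2 fun k => hψdiff k s).hasDerivAt
  have hψne : ψ s ≠ 0 := fun h => by simpa [h] using hψunit s
  have hframe (j : Fin 3) : 2 * spinorBilin (ψ s) ψ' j =
      -(κ s) * T s j + τ s * B s j + I * (-(τ s) * N s j) := by
    refine (hψ.spinorBilin_self j).unique ?_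
    rw [show (fun t => spinorBilin (ψ t) (ψ t) j) = fun t => (N t j : ℂ) + I * B t j from
      funext fun t => (hNB t j).symm]
    exact_mod_cast (hN s j).ofReal_comp.fun_add ((hB s j).ofReal_comp.const_mul I)
  set v := -(I * τ s) • ψ s + (κ s : ℂ) • mate (ψ s)
  have hv : spinorBilin (ψ s) ((2 : ℂ) • ψ' - v) = 0 := by
    funext j
    simp only [v, spinorBilin_sub_right, spinorBilin_add_right, spinorBilin_smul_right,
      Pi.sub_apply, Pi.add_apply, Pi.smul_apply, Pi.zero_apply, smul_eq_mul,
      spinorBilin_comm (ψ s) (mate _)]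
    linear_combination hframe j - I * τ s * hNB s j - κ s * hTrep s j + τ s * B s j * I_mul_I
  intro k
  refine (hasDerivAt_pi.1 hψ k).congr_deriv ?_
  have hk := congrFun (eq_zero_of_spinorBilin_eq_zero hψne hv) k
  simp only [v, Pi.sub_apply, Pi.add_apply, Pi.smul_apply, Pi.zero_apply, smul_eq_mul,
    sub_eq_zero] at hk
  linear_combination hk / 2

/-- **Spinor Frenet equation.** If the unit vector fields T, N, B satisfy the Frenet
equations with curvature κ and torsion τ, and the differentiable spinor ψ with
ψ̄ᵗψ = 1 represents the triad {N, B, T} (i.e. N + iB = ψᵗσψ, T = −ψ̂ᵗσψ), then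
dψ/ds = (1/2)(−iτψ + κψ̂). -/
theorem spinor_frenet_equation
    (T N B : ℝ → Fin 3 → ℝ) (κ τ : ℝ → ℝ)
    (hκ : Differentiable ℝ κ) (hτ : Differentiable ℝ τ)
    (hTunit : ∀ s, ∑ j, T s j ^ 2 = 1)
    (hNunit : ∀ s, ∑ j, N s j ^ 2 = 1)
    (hBunit : ∀ s, ∑ j, B s j ^ 2 = 1)
    (hT : ∀ (s : ℝ) (j : Fin 3), HasDerivAt (fun t => T t j) (κ s * N s j) s)
    (hN : ∀ (s : ℝ) (j : Fin 3),
      HasDerivAt (fun t => N t j) (-(κ s) * T s j + τ s * B s j) s)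
    (hB : ∀ (s : ℝ) (j : Fin 3), HasDerivAt (fun t => B t j) (-(τ s) * N s j) s)
    (ψ : ℝ → Fin 2 → ℂ)
    (hψdiff : ∀ k : Fin 2, Differentiable ℝ fun t => ψ t k)
    (hψunit : ∀ s, (starRingEnd ℂ) (ψ s 0) * ψ s 0 + (starRingEnd ℂ) (ψ s 1) * ψ s 1 = 1)
    (hNB : ∀ (s : ℝ) (j : Fin 3),
      (N s j : ℂ) + Complex.I * (B s j : ℂ) = spinorBilin (ψ s) (ψ s) j)
    (hTrep : ∀ (s : ℝ) (j : Fin 3), (T s j : ℂ) = -(spinorBilin (mate (ψ s)) (ψ s) j)) :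
    ∀ (s : ℝ) (k : Fin 2),
      HasDerivAt (fun t => ψ t k)
        ((1 / 2) * (-Complex.I * (τ s : ℂ) * ψ s k + (κ s : ℂ) * mate (ψ s) k)) s :=
  spinor_frenet_equation_general T N B κ τ hN hB ψ hψdiff hψunit hNB hTrep
end

section
/- (Theorem 1: Spinor Darboux equation) Let T, g, n : ℝ → ℝ³ be differentiable unit vector fields along a curve parametrized by arc length on an oriented surface, satisfying the Darboux equations dT/ds = κ_g·g + κ_n·n, dg/ds = −κ_g·T + τ_g·n, dn/ds = −κ_n·T − τ_g·g for differentiable functions κ_g, κ_n, τ_g : ℝ → ℝ. Let φ : ℝ → ℂ² be a differentiable spinor with φ̄ᵗφ = 1 representing the triad {g, n, T}, i.e., g(s) + i·n(s) = φ(s)ᵗσφ(s) and T(s) = −φ̂(s)ᵗσφ(s) for all s. Then φ satisfies the single spinor equation dφ/ds = (−i·τ_g/2)·φ + ((i·κ_n + κ_g)/2)·φ̂. -/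
open Matrix Complex

/-- **Spinor Darboux equation (Theorem 1).** If the unit vector fields T, g, n satisfy
the Darboux equations with geodesic curvature κ_g, normal curvature κ_n and geodesic
torsion τ_g, and the differentiable spinor φ with φ̄ᵗφ = 1 represents the triad
{g, n, T} (i.e. g + i·n = φᵗσφ, T = −φ̂ᵗσφ), then
dφ/ds = (−i·τ_g/2)·φ + ((i·κ_n + κ_g)/2)·φ̂. -/
theorem spinor_darboux_equation
    (T g n : ℝ → Fin 3 → ℝ) (κg κn τg : ℝ → ℝ)
    (hκg : Differentiable ℝ κg) (hκn : Differentiable ℝ κn) (hτg : Differentiable ℝ τg)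
    (hTunit : ∀ s, ∑ j, T s j ^ 2 = 1)
    (hgunit : ∀ s, ∑ j, g s j ^ 2 = 1)
    (hnunit : ∀ s, ∑ j, n s j ^ 2 = 1)
    (hT : ∀ (s : ℝ) (j : Fin 3),
      HasDerivAt (fun t => T t j) (κg s * g s j + κn s * n s j) s)
    (hg : ∀ (s : ℝ) (j : Fin 3),
      HasDerivAt (fun t => g t j) (-(κg s) * T s j + τg s * n s j) s)
    (hn : ∀ (s : ℝ) (j : Fin 3),
      HasDerivAt (fun t => n t j) (-(κn s) * T s j - τg s * g s j) s)
    (φ : ℝ → Fin 2 → ℂ)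
    (hφdiff : ∀ k : Fin 2, Differentiable ℝ fun t => φ t k)
    (hφunit : ∀ s, (starRingEnd ℂ) (φ s 0) * φ s 0 + (starRingEnd ℂ) (φ s 1) * φ s 1 = 1)
    (hgn : ∀ (s : ℝ) (j : Fin 3),
      (g s j : ℂ) + Complex.I * (n s j : ℂ) = spinorBilin (φ s) (φ s) j)
    (hTrep : ∀ (s : ℝ) (j : Fin 3), (T s j : ℂ) = -(spinorBilin (mate (φ s)) (φ s) j)) :
    ∀ (s : ℝ) (k : Fin 2),
      HasDerivAt (fun t => φ t k)
        ((-Complex.I * (τg s : ℂ) / 2) * φ s k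
          + ((Complex.I * (κn s : ℂ) + (κg s : ℂ)) / 2) * mate (φ s) k) s := by
  intro s k
  have ha : HasDerivAt (fun t => φ t 0) (deriv (fun t => φ t 0) s) s :=
    ((hφdiff 0) s).hasDerivAt
  have hb : HasDerivAt (fun t => φ t 1) (deriv (fun t => φ t 1) s) s :=
    ((hφdiff 1) s).hasDerivAt
  set a := deriv (fun t => φ t 0) s with ha'
  set b := deriv (fun t => φ t 1) s with hb'
  set p := φ s 0 with hp'
  set q := φ s 1 with hq'
  set c := (starRingEnd ℂ) p with hc'
  set d := (starRingEnd ℂ) q with hd'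
  -- polynomial forms of the bilinear representation
  have hV0 : ∀ t, ((g t 0 : ℝ) : ℂ) + Complex.I * ((n t 0 : ℝ) : ℂ) = φ t 0 * φ t 0 - φ t 1 * φ t 1 := by
    intro t; rw [hgn t 0]
    simp [spinorBilin, sigma1, Matrix.mulVec, dotProduct, Fin.sum_univ_two]; ring
  have hV1 : ∀ t, ((g t 1 : ℝ) : ℂ) + Complex.I * ((n t 1 : ℝ) : ℂ)
      = Complex.I * (φ t 0 * φ t 0 + φ t 1 * φ t 1) := by
    intro t; rw [hgn t 1]
    simp [spinorBilin, sigma2, Matrix.mulVec, dotProduct, Fin.sum_univ_two]; ring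
  have hV2 : ∀ t, ((g t 2 : ℝ) : ℂ) + Complex.I * ((n t 2 : ℝ) : ℂ)
      = -2 * (φ t 0 * φ t 1) := by
    intro t; rw [hgn t 2]
    simp [spinorBilin, sigma3, Matrix.mulVec, dotProduct, Fin.sum_univ_two]; ring
  have hT0 : ((T s 0 : ℝ) : ℂ) = d * p + c * q := by
    rw [hTrep s 0]
    simp [spinorBilin, sigma1, mate, Matrix.mulVec, dotProduct, Fin.sum_univ_two,
      hp', hq', hc', hd']; ring
  have hT1 : ((T s 1 : ℝ) : ℂ) = Complex.I * (d * p - c * q) := by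
    rw [hTrep s 1]
    simp [spinorBilin, sigma2, mate, Matrix.mulVec, dotProduct, Fin.sum_univ_two,
      hp', hq', hc', hd']; ring
  have hT2 : ((T s 2 : ℝ) : ℂ) = c * p - d * q := by
    rw [hTrep s 2]
    simp [spinorBilin, sigma3, mate, Matrix.mulVec, dotProduct, Fin.sum_univ_two,
      hp', hq', hc', hd']; ring
  -- conjugated forms
  have hVc0 : ((g s 0 : ℝ) : ℂ) - Complex.I * ((n s 0 : ℝ) : ℂ) = c ^ 2 - d ^ 2 := by
    have h := congrArg (starRingEnd ℂ) (hV0 s)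
    simp only [map_add, _root_.map_mul, map_sub, map_pow, map_neg, map_ofNat, Complex.conj_ofReal, Complex.conj_I] at h
    rw [hc', hd', hp', hq']; linear_combination h
  have hVc1 : ((g s 1 : ℝ) : ℂ) - Complex.I * ((n s 1 : ℝ) : ℂ)
      = -Complex.I * (c ^ 2 + d ^ 2) := by
    have h := congrArg (starRingEnd ℂ) (hV1 s)
    simp only [map_add, _root_.map_mul, map_sub, map_pow, map_neg, map_ofNat, Complex.conj_ofReal, Complex.conj_I] at h
    rw [hc', hd', hp', hq']; linear_combination h
  have hVc2 : ((g s 2 : ℝ) : ℂ) - Complex.I * ((n s 2 : ℝ) : ℂ) = -2 * (c * d) := by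
    have h := congrArg (starRingEnd ℂ) (hV2 s)
    simp only [map_add, _root_.map_mul, map_sub, map_neg, map_ofNat, Complex.conj_ofReal,
      Complex.conj_I] at h
    rw [hc', hd', hp', hq']; linear_combination h
  -- derivative equations
  have hR0 := (ha.mul ha).sub (hb.mul hb)
  have hR1 := ((ha.mul ha).add (hb.mul hb)).const_mul Complex.I
  have hR2 := (ha.mul hb).const_mul (-2 : ℂ)
  have hL0 : HasDerivAt (fun t => ((g t 0 : ℝ) : ℂ) + Complex.I * ((n t 0 : ℝ) : ℂ))
      (((-(κg s) * T s 0 + τg s * n s 0 : ℝ) : ℂ)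
        + Complex.I * ((-(κn s) * T s 0 - τg s * g s 0 : ℝ) : ℂ)) s :=
    (hg s 0).ofReal_comp.add ((hn s 0).ofReal_comp.const_mul Complex.I)
  have hL1 : HasDerivAt (fun t => ((g t 1 : ℝ) : ℂ) + Complex.I * ((n t 1 : ℝ) : ℂ))
      (((-(κg s) * T s 1 + τg s * n s 1 : ℝ) : ℂ)
        + Complex.I * ((-(κn s) * T s 1 - τg s * g s 1 : ℝ) : ℂ)) s :=
    (hg s 1).ofReal_comp.add ((hn s 1).ofReal_comp.const_mul Complex.I)
  have hL2 : HasDerivAt (fun t => ((g t 2 : ℝ) : ℂ) + Complex.I * ((n t 2 : ℝ) : ℂ))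
      (((-(κg s) * T s 2 + τg s * n s 2 : ℝ) : ℂ)
        + Complex.I * ((-(κn s) * T s 2 - τg s * g s 2 : ℝ) : ℂ)) s :=
    (hg s 2).ofReal_comp.add ((hn s 2).ofReal_comp.const_mul Complex.I)
  have A0 := hL0.unique (hR0.congr_of_eventuallyEq (Filter.Eventually.of_forall hV0))
  have A1 := hL1.unique (hR1.congr_of_eventuallyEq (Filter.Eventually.of_forall hV1))
  have A2 := hL2.unique (hR2.congr_of_eventuallyEq (Filter.Eventually.of_forall hV2))
  push_cast at A0 A1 A2
  rw [← hp', ← hq'] at A0 A1 A2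
  -- unit sums as complex identities
  have hTsq : ((T s 0 : ℝ) : ℂ) ^ 2 + ((T s 1 : ℝ) : ℂ) ^ 2 + ((T s 2 : ℝ) : ℂ) ^ 2 = 1 := by
    have h := hTunit s
    rw [Fin.sum_univ_three] at h
    exact_mod_cast h
  have hgsq : ((g s 0 : ℝ) : ℂ) ^ 2 + ((g s 1 : ℝ) : ℂ) ^ 2 + ((g s 2 : ℝ) : ℂ) ^ 2 = 1 := by
    have h := hgunit s
    rw [Fin.sum_univ_three] at h
    exact_mod_cast h
  have hnsq : ((n s 0 : ℝ) : ℂ) ^ 2 + ((n s 1 : ℝ) : ℂ) ^ 2 + ((n s 2 : ℝ) : ℂ) ^ 2 = 1 := by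
    have h := hnunit s
    rw [Fin.sum_univ_three] at h
    exact_mod_cast h
  -- orthogonality: ∑ Tⱼ (gⱼ ± i nⱼ) = 0
  have cTV : ((T s 0 : ℝ) : ℂ) * (((g s 0 : ℝ) : ℂ) + Complex.I * ((n s 0 : ℝ) : ℂ))
      + ((T s 1 : ℝ) : ℂ) * (((g s 1 : ℝ) : ℂ) + Complex.I * ((n s 1 : ℝ) : ℂ))
      + ((T s 2 : ℝ) : ℂ) * (((g s 2 : ℝ) : ℂ) + Complex.I * ((n s 2 : ℝ) : ℂ)) = 0 := by
    rw [hT0, hT1, hT2, hV0 s, hV1 s, hV2 s, ← hp', ← hq']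
    linear_combination (p ^ 3 * d + p * q ^ 2 * d - p ^ 2 * q * c - q ^ 3 * c) * Complex.I_sq
  have cTVc : ((T s 0 : ℝ) : ℂ) * (((g s 0 : ℝ) : ℂ) - Complex.I * ((n s 0 : ℝ) : ℂ))
      + ((T s 1 : ℝ) : ℂ) * (((g s 1 : ℝ) : ℂ) - Complex.I * ((n s 1 : ℝ) : ℂ))
      + ((T s 2 : ℝ) : ℂ) * (((g s 2 : ℝ) : ℂ) - Complex.I * ((n s 2 : ℝ) : ℂ)) = 0 := by
    rw [hT0, hT1, hT2, hVc0, hVc1, hVc2]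
    linear_combination (q * c * d ^ 2 + q * c ^ 3 - p * d ^ 3 - p * c ^ 2 * d) * Complex.I_sq
  have hu : c * p + d * q = 1 := by rw [hc', hd', hp', hq']; exact hφunit s
  -- the two coefficient equations
  have eβ : p * b - q * a = (((κg s : ℝ) : ℂ) + Complex.I * ((κn s : ℝ) : ℂ)) / 2 := by
    linear_combination (((T s 0 : ℝ) : ℂ) / 2) * A0 + (((T s 1 : ℝ) : ℂ) / 2) * A1
      + (((T s 2 : ℝ) : ℂ) / 2) * A2
      + ((((κg s : ℝ) : ℂ) + Complex.I * ((κn s : ℝ) : ℂ)) / 2) * hTsq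
      + (Complex.I * ((τg s : ℝ) : ℂ) / 2) * cTV
      + (p * a - q * b) * hT0 + (Complex.I * (p * a + q * b)) * hT1
      + (-(a * q + p * b)) * hT2 + (q * a - p * b) * hu
      + (-(((T s 0 : ℝ) : ℂ) * ((n s 0 : ℝ) : ℂ) + ((T s 1 : ℝ) : ℂ) * ((n s 1 : ℝ) : ℂ)
          + ((T s 2 : ℝ) : ℂ) * ((n s 2 : ℝ) : ℂ)) * ((τg s : ℝ) : ℂ) / 2
        - b * q ^ 2 * c + b * p * q * d - a * p * q * c + a * p ^ 2 * d) * Complex.I_sq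
  have eα : c * a + d * b = -Complex.I * ((τg s : ℝ) : ℂ) / 2 := by
    linear_combination (-(((g s 0 : ℝ) : ℂ) - Complex.I * ((n s 0 : ℝ) : ℂ)) / 4) * A0
      + (-(((g s 1 : ℝ) : ℂ) - Complex.I * ((n s 1 : ℝ) : ℂ)) / 4) * A1
      + (-(((g s 2 : ℝ) : ℂ) - Complex.I * ((n s 2 : ℝ) : ℂ)) / 4) * A2
      + (-((((κg s : ℝ) : ℂ) + Complex.I * ((κn s : ℝ) : ℂ))) / 4) * cTVc
      + (-(Complex.I * ((τg s : ℝ) : ℂ)) / 4) * hgsq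
      + (-(Complex.I * ((τg s : ℝ) : ℂ)) / 4) * hnsq
      + (-(2 * p * a - 2 * q * b) / 4) * hVc0
      + (-(2 * Complex.I * (p * a + q * b)) / 4) * hVc1
      + ((2 * (a * q + p * b)) / 4) * hVc2
      + (-(c * a + d * b)) * hu
      + ((((g s 0 : ℝ) : ℂ) * ((n s 0 : ℝ) : ℂ) + ((g s 1 : ℝ) : ℂ) * ((n s 1 : ℝ) : ℂ)
          + ((g s 2 : ℝ) : ℂ) * ((n s 2 : ℝ) : ℂ)) * ((τg s : ℝ) : ℂ) / 4
        + (b * q + a * p) * (c ^ 2 + d ^ 2) / 2) * Complex.I_sq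
  -- conclude
  fin_cases k
  · show HasDerivAt (fun t => φ t 0)
      ((-Complex.I * ((τg s : ℝ) : ℂ) / 2) * φ s 0
        + ((Complex.I * ((κn s : ℝ) : ℂ) + ((κg s : ℝ) : ℂ)) / 2) * mate (φ s) 0) s
    have hm : mate (φ s) 0 = -d := by rw [hd', hq']; rfl
    have key : (-Complex.I * ((τg s : ℝ) : ℂ) / 2) * φ s 0
        + ((Complex.I * ((κn s : ℝ) : ℂ) + ((κg s : ℝ) : ℂ)) / 2) * mate (φ s) 0 = a := by
      rw [hm, ← hp']
      linear_combination a * hu - p * eα + d * eβ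
    rw [key]; exact ha
  · show HasDerivAt (fun t => φ t 1)
      ((-Complex.I * ((τg s : ℝ) : ℂ) / 2) * φ s 1
        + ((Complex.I * ((κn s : ℝ) : ℂ) + ((κg s : ℝ) : ℂ)) / 2) * mate (φ s) 1) s
    have hm : mate (φ s) 1 = c := by rw [hc', hp']; rfl
    have key : (-Complex.I * ((τg s : ℝ) : ℂ) / 2) * φ s 1
        + ((Complex.I * ((κn s : ℝ) : ℂ) + ((κg s : ℝ) : ℂ)) / 2) * mate (φ s) 1 = b := by
      rw [hm, ← hq']
      linear_combination b * hu - q * eα - c * eβ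
    rw [key]; exact hb
end
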